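/- For every n ≥ 1 and k ≥ 2, there exists a function f : E_k^n → E_k with d(f) = (k-2)n + ⌈n/k⌉. -/

import Mathlib

/-!
Along a chain the coordinate sum strictly increases, so a chain has at most `n(k-1) + 1`
elements. On a chain with `L` steps of which `D` are descents of `f`, the value of `f` drops by
at least `1` at each descent and rises by at most `k - 1` at each other step, while staying in
`[0, k-1]`; hence `k D ≤ (k-1)(L+1)`, which bounds `d(f)` by `(k-2)n + ⌈n/k⌉` for every `f`.
The bound is attained by `f x = k - 1 - (∑ xᵢ mod k)` along a saturated chain from `0` to the top,
on which `f` descends at every step except when the coordinate sum reaches a multiple of `k`.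
-/

/-- A chain in `E_k^n`: pairwise distinct tuples increasing coordinatewise,
    i.e. strictly increasing in the coordinatewise (product) order. -/
def IsChainE {n k : ℕ} (C : List (Fin n → Fin k)) : Prop :=
  C.Chain' (· < ·)

/-- The decrease `d_C(f)` of `f` over a chain `C`: number of consecutive
    pairs on which `f` strictly decreases. -/
def decC {n k : ℕ} (f : (Fin n → Fin k) → Fin k) (C : List (Fin n → Fin k)) : ℕ :=
  (C.zip C.tail).countP (fun p => decide (f p.2 < f p.1))

/-- The decrease `d(f)` of `f`: maximum of `d_C(f)` over all chains `C`. -/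
noncomputable def dF {n k : ℕ} (f : (Fin n → Fin k) → Fin k) : ℕ :=
  sSup {m : ℕ | ∃ C : List (Fin n → Fin k), IsChainE C ∧ decC f C = m}

variable {n k : ℕ}

lemma decC_nil (f : (Fin n → Fin k) → Fin k) : decC f [] = 0 := rfl

lemma decC_singleton (f : (Fin n → Fin k) → Fin k) (a : Fin n → Fin k) : decC f [a] = 0 := rfl

lemma decC_cons_cons (f : (Fin n → Fin k) → Fin k) (a b : Fin n → Fin k)
    (t : List (Fin n → Fin k)) :
    decC f (a :: b :: t) = decC f (b :: t) + if f b < f a then 1 else 0 := by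
  simp [decC, List.countP_cons]

-- The summand `f a` is the room `f` still has to drop; it makes the induction go through.
lemma decC_mul_le_add (f : (Fin n → Fin k) → Fin k) (a : Fin n → Fin k)
    (t : List (Fin n → Fin k)) :
    decC f (a :: t) * k ≤ (k - 1) * t.length + f a := by
  induction t generalizing a with
  | nil => simp [decC_singleton]
  | cons b t ih =>
    have := ih b
    have := (f b).isLt
    rw [decC_cons_cons, add_mul, List.length_cons, mul_add, mul_one]
    split_ifs with h
    · rw [Fin.lt_def] at h; omega
    · omega

lemma decC_mul_le_length (f : (Fin n → Fin k) → Fin k) (C : List (Fin n → Fin k)) :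
    decC f C * k ≤ (k - 1) * C.length := by
  cases C with
  | nil => simp [decC_nil]
  | cons a t =>
    have := (f a).isLt
    calc decC f (a :: t) * k ≤ (k - 1) * t.length + f a := decC_mul_le_add f a t
      _ ≤ (k - 1) * (a :: t).length := by rw [List.length_cons, mul_add_one]; omega

def weight (x : Fin n → Fin k) : ℕ := ∑ i, (x i : ℕ)

lemma weight_strictMono : StrictMono (weight : (Fin n → Fin k) → ℕ) := by
  intro x y hxy
  obtain ⟨hle, i, hi⟩ := Pi.lt_def.mp hxy
  exact Finset.sum_lt_sum (fun i _ => hle i) ⟨i, Finset.mem_univ i, hi⟩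

lemma weight_le (x : Fin n → Fin k) : weight x ≤ n * (k - 1) := by
  simpa [weight] using
    Finset.sum_le_sum fun i (_ : i ∈ Finset.univ) => Nat.le_sub_one_of_lt (x i).isLt

lemma IsChainE.length_le {C : List (Fin n → Fin k)} (hC : IsChainE C) :
    C.length ≤ n * (k - 1) + 1 := by
  have hchain : (C.map weight).IsChain (· < ·) :=
    (List.isChain_map weight).2 (hC.imp fun _ _ h => weight_strictMono h)
  have hsub : C.map weight ⊆ List.range (n * (k - 1) + 1) := by
    simp only [List.subset_def, List.mem_map, List.mem_range]
    rintro _ ⟨x, -, rfl⟩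
    exact Nat.lt_succ_of_le (weight_le x)
  simpa using ((List.isChain_iff_pairwise.1 hchain).nodup.subperm hsub).length_le

def decBound (n k : ℕ) : ℕ := (k - 2) * n + (n + k - 1) / k

lemma decBound_eq_div (hk : 2 ≤ k) :
    decBound n k = (k - 1) * (n * (k - 1) + 1) / k := by
  obtain ⟨m, rfl⟩ : ∃ m, k = m + 2 := ⟨k - 2, by omega⟩
  rw [decBound, show n + (m + 2) - 1 = n + m + 1 by omega, Nat.add_sub_cancel,
    show (m + 2 - 1) * (n * (m + 2 - 1) + 1) = (m + 2) * (m * n) + (n + m + 1) by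
      rw [show m + 2 - 1 = m + 1 by omega]; ring,
    Nat.mul_add_div (by omega)]

lemma decBound_eq_sub_div (hk : 2 ≤ k) :
    decBound n k = n * (k - 1) - n * (k - 1) / k := by
  obtain ⟨m, rfl⟩ : ∃ m, k = m + 2 := ⟨k - 2, by omega⟩
  rw [decBound, show n + (m + 2) - 1 = n + m + 1 by omega, Nat.add_sub_cancel,
    show m + 2 - 1 = m + 1 by omega]
  have hq1 := Nat.div_mul_le_self (n + m + 1) (m + 2)
  have hq2 := Nat.lt_div_mul_add (a := n + m + 1) (b := m + 2) (by omega)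
  set q := (n + m + 1) / (m + 2)
  have hqn : q ≤ n := by nlinarith
  have hdiv : n * (m + 1) / (m + 2) = n - q := by
    apply Nat.div_eq_of_lt_le
    · zify [hqn]; nlinarith
    · zify [hqn]; nlinarith
  have : n - q ≤ n * (m + 1) := (Nat.sub_le n q).trans (Nat.le_mul_of_pos_right n (by omega))
  rw [hdiv]
  zify [hqn, this]
  ring

lemma decC_le_decBound (hk : 2 ≤ k) (f : (Fin n → Fin k) → Fin k) {C : List (Fin n → Fin k)}
    (hC : IsChainE C) : decC f C ≤ decBound n k := by
  rw [decBound_eq_div hk, Nat.le_div_iff_mul_le (by omega)]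
  exact (decC_mul_le_length f C).trans (Nat.mul_le_mul_left _ hC.length_le)

lemma dF_le_decBound (hk : 2 ≤ k) (f : (Fin n → Fin k) → Fin k) : dF f ≤ decBound n k :=
  csSup_le ⟨0, [], List.isChain_nil, decC_nil f⟩ fun _ ⟨_, hC, h⟩ => h ▸ decC_le_decBound hk f hC

lemma decC_le_dF (hk : 2 ≤ k) (f : (Fin n → Fin k) → Fin k) {C : List (Fin n → Fin k)}
    (hC : IsChainE C) : decC f C ≤ dF f :=
  le_csSup ⟨decBound n k, fun _ ⟨_, hC, h⟩ => h ▸ decC_le_decBound hk f hC⟩ ⟨C, hC, rfl⟩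

lemma sum_min_sub_mul (m j : ℕ) : ∀ n : ℕ, ∑ i : Fin n, min m (j - i * m) = min j (n * m)
  | 0 => by simp
  | n + 1 => by
    simp only [Fin.sum_univ_castSucc, Fin.val_castSucc, Fin.val_last, sum_min_sub_mul m j n,
      add_one_mul]
    omega

-- Raises coordinate `0` to `k - 1`, then coordinate `1`, and so on, one unit per step.
def staircase [NeZero k] (j : ℕ) : Fin n → Fin k :=
  fun i => ⟨min (k - 1) (j - i * (k - 1)), by have := NeZero.pos k; omega⟩

lemma weight_staircase [NeZero k] (j : ℕ) :
    weight (staircase j : Fin n → Fin k) = min j (n * (k - 1)) :=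
  sum_min_sub_mul (k - 1) j n

lemma staircase_mono [NeZero k] : Monotone (staircase : ℕ → Fin n → Fin k) :=
  fun _ _ h i => Fin.mk_le_mk.2 (by omega)

lemma isChainE_staircase [NeZero k] :
    IsChainE ((List.range (n * (k - 1) + 1)).map (staircase : ℕ → Fin n → Fin k)) := by
  refine (List.isChain_map _).2 ((List.isChain_range_succ _ _).2 fun j hj => ?_)
  refine lt_of_le_of_ne (staircase_mono j.le_succ) fun h => ?_
  have := congrArg weight h
  rw [weight_staircase, weight_staircase] at this
  omega

lemma decC_map_range (f : (Fin n → Fin k) → Fin k) (c : ℕ → Fin n → Fin k) (m : ℕ) :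
    decC f ((List.range (m + 1)).map c) =
      (List.range m).countP fun j => f (c (j + 1)) < f (c j) := by
  induction m generalizing c with
  | zero => rfl
  | succ m ih =>
    rw [List.range_succ_eq_map, List.map_cons, List.map_map, List.range_succ_eq_map,
      List.map_cons, decC_cons_cons, ← List.map_cons, ← List.range_succ_eq_map, ih,
      List.range_succ_eq_map (n := m), List.countP_cons, List.countP_map]
    simp only [decide_eq_true_eq]
    rfl

lemma countP_range_not_dvd_succ (k m : ℕ) :
    (List.range m).countP (fun j => ¬ k ∣ j + 1) = m - m / k := by
  have h := List.length_eq_countP_add_countP (fun j => decide (k ∣ j + 1)) (l := List.range m)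
  have hm : (List.range m).countP (fun j => k ∣ j + 1) = m / k := by
    rw [← Nat.card_multiples]
    simp [List.countP_eq_length_filter, Finset.card_def, Multiset.range]
  simp only [List.length_range, hm, decide_not, decide_eq_true_eq] at h ⊢
  omega

lemma mod_lt_succ_mod_iff (hk : 1 < k) (j : ℕ) : j % k < (j + 1) % k ↔ ¬ k ∣ j + 1 := by
  have := Nat.mod_lt j (show 0 < k by omega)
  rw [Nat.dvd_iff_mod_eq_zero, Nat.add_mod_eq_ite, Nat.mod_eq_of_lt hk]
  split_ifs
  · omega
  · simp

def revSumMod [NeZero k] (x : Fin n → Fin k) : Fin k := (Fin.ofNat k (weight x)).rev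

lemma revSumMod_lt_revSumMod_iff [NeZero k] {x y : Fin n → Fin k} :
    revSumMod y < revSumMod x ↔ weight x % k < weight y % k := by
  rw [revSumMod, revSumMod, Fin.rev_lt_rev, Fin.lt_def, Fin.val_ofNat, Fin.val_ofNat]

lemma decC_revSumMod_staircase [NeZero k] (hk : 2 ≤ k) :
    decC revSumMod ((List.range (n * (k - 1) + 1)).map (staircase : ℕ → Fin n → Fin k)) =
      decBound n k := by
  rw [decC_map_range, decBound_eq_sub_div hk, ← countP_range_not_dvd_succ]
  refine List.countP_congr fun j hj => ?_
  have hj : j + 1 ≤ n * (k - 1) := List.mem_range.1 hj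
  simp only [decide_eq_true_eq, revSumMod_lt_revSumMod_iff, weight_staircase,
    min_eq_left hj, min_eq_left (Nat.le_of_succ_le hj), mod_lt_succ_mod_iff hk]

theorem stmt12_general {n k : ℕ} (hk : 2 ≤ k) :
    ∃ f : (Fin n → Fin k) → Fin k, dF f = (k - 2) * n + (n + k - 1) / k := by
  have : NeZero k := ⟨by omega⟩
  refine ⟨revSumMod, le_antisymm (dF_le_decBound hk _) ?_⟩
  calc decBound n k = decC revSumMod ((List.range (n * (k - 1) + 1)).map staircase) :=
        (decC_revSumMod_staircase hk).symm
    _ ≤ dF revSumMod := decC_le_dF hk _ isChainE_staircase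

/-- For `n ≥ 1`, `k ≥ 2`, there exists `f : E_k^n → E_k` with
    `d(f) = (k-2)n + ⌈n/k⌉`. -/
theorem stmt12 {n k : ℕ} (hn : 1 ≤ n) (hk : 2 ≤ k) :
    ∃ f : (Fin n → Fin k) → Fin k, dF f = (k - 2) * n + (n + k - 1) / k :=
  stmt12_general hk
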